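/- Let X ∈ 𝓢^q be irreducible with |X| > 1. Then Δ^i X is irreducible for every integer i ≥ 1. -/

import Mathlib

open Equiv Pointwise

namespace FPS

/-- The support of a permutation of `ℕ`. -/
def psupp (ρ : Equiv.Perm ℕ) : Set ℕ := {ω | ρ ω ≠ ω}

/-- The support of a set of permutations of `ℕ`. -/
def ssupp (X : Set (Equiv.Perm ℕ)) : Set ℕ := ⋃ ρ ∈ X, psupp ρ

/-- `Sym(α)`: the subgroup of permutations of `ℕ` supported on the subset `α`. -/
def symOn (α : Set ℕ) : Subgroup (Equiv.Perm ℕ) where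
  carrier := {g | ∀ ω, ω ∉ α → g ω = ω}
  one_mem' := fun _ _ => rfl
  mul_mem' := by
    intro a b ha hb ω hω
    have hbω := hb ω hω
    have haω := ha ω hω
    show a (b ω) = ω
    rw [hbω, haω]
  inv_mem' := by
    intro a ha ω hω
    have haω := ha ω hω
    show a⁻¹ ω = ω
    nth_rewrite 1 [← haω]
    simp

/-- Membership in the family `𝓕`: finite nonempty sets of finitary permutations,
different from `{1}`. -/
def memF (X : Set (Equiv.Perm ℕ)) : Prop :=
  X.Finite ∧ X.Nonempty ∧ X ≠ {1} ∧ ∀ ρ ∈ X, (psupp ρ).Finite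

/-- Membership in `𝓢^q`: members of `𝓕` all of whose elements are products of `q`-cycles
(each orbit on the support has size `q`) with full support. -/
def memS (q : ℕ) (X : Set (Equiv.Perm ℕ)) : Prop :=
  memF X ∧ (∀ ρ ∈ X, psupp ρ = ssupp X) ∧
    ∀ ρ ∈ X, ∀ ω ∈ psupp ρ, (Set.range fun n : ℤ => (ρ ^ n) ω).ncard = q

/-- Right conjugation `x ↦ x^g = g⁻¹ x g`. -/
def conjR (g x : Equiv.Perm ℕ) : Equiv.Perm ℕ := g⁻¹ * x * g

/-- Conjugate of a set of permutations: `X^g`. -/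
def conjSet (g : Equiv.Perm ℕ) (X : Set (Equiv.Perm ℕ)) : Set (Equiv.Perm ℕ) := conjR g '' X

/-- The setwise stabilizer (under conjugation) of a set of permutations,
as a subgroup of the full group `Sym(ℕ)`. -/
def setStab (X : Set (Equiv.Perm ℕ)) : Subgroup (Equiv.Perm ℕ) where
  carrier := {g | ∀ x, x ∈ X ↔ g⁻¹ * x * g ∈ X}
  one_mem' := by
    intro x
    simp
  mul_mem' := by
    intro a b ha hb x
    have h1 := ha x
    have h2 := hb (a⁻¹ * x * a)
    have e : b⁻¹ * (a⁻¹ * x * a) * b = (a * b)⁻¹ * x * (a * b) := by group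
    rw [e] at h2
    exact h1.trans h2
  inv_mem' := by
    intro a ha x
    have h := ha (a * x * a⁻¹)
    have e : a⁻¹ * (a * x * a⁻¹) * a = x := by group
    rw [e] at h
    have e2 : a * x * a⁻¹ = a⁻¹⁻¹ * x * a⁻¹ := by group
    rw [e2] at h
    exact h.symm

/-- `N_X`: the stabilizer of `X` in `G_X = Sym(supp X)`. -/
def NX (X : Set (Equiv.Perm ℕ)) : Subgroup (Equiv.Perm ℕ) := symOn (ssupp X) ⊓ setStab X

/-- `S_X = C_{G_X}(X)`: the pointwise centralizer of `X` in `G_X = Sym(supp X)`. -/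
def SX (X : Set (Equiv.Perm ℕ)) : Subgroup (Equiv.Perm ℕ) :=
  symOn (ssupp X) ⊓ Subgroup.centralizer X

/-- `Q` is a Sylow `p`-subgroup of the subgroup `H` (that is, a maximal `p`-subgroup of `H`). -/
def IsSylowOf {G : Type*} [Group G] (p : ℕ) (Q H : Subgroup G) : Prop :=
  Q ≤ H ∧ IsPGroup p Q ∧ ∀ R : Subgroup G, R ≤ H → IsPGroup p R → Q ≤ R → R = Q

/-- `Ξ_X = ⋃_{g ∈ G_X} X^g`. -/
def Xi (X : Set (Equiv.Perm ℕ)) : Set (Equiv.Perm ℕ) :=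
  ⋃ g ∈ (symOn (ssupp X) : Set (Equiv.Perm ℕ)), conjSet g X

/-- `X` is closed: `C_{G_X}(Q_X) ∩ Ξ_X = X` for (any) Sylow `p`-subgroup `Q_X` of `S_X`. -/
def IsClosedSet (p : ℕ) (X : Set (Equiv.Perm ℕ)) : Prop :=
  ∀ Q : Subgroup (Equiv.Perm ℕ), IsSylowOf p Q (SX X) →
    (Subgroup.centralizer (Q : Set (Equiv.Perm ℕ)) : Set (Equiv.Perm ℕ)) ∩ Xi X = X

/-- `X` is exact: `supp Q_X = supp X` for (any) Sylow `p`-subgroup `Q_X` of `S_X`. -/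
def IsExactSet (p : ℕ) (X : Set (Equiv.Perm ℕ)) : Prop :=
  ∀ Q : Subgroup (Equiv.Perm ℕ), IsSylowOf p Q (SX X) →
    ssupp (Q : Set (Equiv.Perm ℕ)) = ssupp X

/-- `X` is projective: `Q_X = 1`. -/
def IsProjectiveSet (p : ℕ) (X : Set (Equiv.Perm ℕ)) : Prop :=
  ∀ Q : Subgroup (Equiv.Perm ℕ), IsSylowOf p Q (SX X) → Q = ⊥

/-- `X ∈ 𝓕` is irreducible if it is not a product of two members of `𝓕`
with disjoint supports. -/
def IsIrred (X : Set (Equiv.Perm ℕ)) : Prop :=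
  memF X ∧ ∀ Y Z : Set (Equiv.Perm ℕ), memF Y → memF Z →
    Disjoint (ssupp Y) (ssupp Z) → X ≠ Y * Z

/-- Two sets of permutations are equivalent if they are conjugate in `Sym(ℕ)`. -/
def EquivSet (X Y : Set (Equiv.Perm ℕ)) : Prop := ∃ g : Equiv.Perm ℕ, conjSet g X = Y

/-- `D` is a realization of `Δ^s X`: the diagonal of a product of `s` disjointly
supported conjugates of `X`. -/
def IsDelta (s : ℕ) (X D : Set (Equiv.Perm ℕ)) : Prop :=
  ∃ g : Fin s → Equiv.Perm ℕ,
    (∀ i j, i ≠ j → Disjoint (ssupp (conjSet (g i) X)) (ssupp (conjSet (g j) X))) ∧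
    D = (fun x => (List.ofFn fun i => conjR (g i) x).prod) '' X

/-- `D` is a realization of the `a`-fold `*`-power `X^a`: a product of `a` disjointly
supported conjugates of `X`. -/
def IsStarPow (a : ℕ) (X D : Set (Equiv.Perm ℕ)) : Prop :=
  ∃ g : Fin a → Equiv.Perm ℕ,
    (∀ i j, i ≠ j → Disjoint (ssupp (conjSet (g i) X)) (ssupp (conjSet (g j) X))) ∧
    D = (List.ofFn fun i => conjSet (g i) X).prod

/-- `X` is a transitive set: `⟨X⟩` is transitive on `supp X`. -/
def TransitiveSet (X : Set (Equiv.Perm ℕ)) : Prop :=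
  ∀ a ∈ ssupp X, ∀ b ∈ ssupp X, ∃ g ∈ Subgroup.closure X, g a = b

lemma mem_setStab {X : Set (Equiv.Perm ℕ)} {g : Equiv.Perm ℕ} :
    g ∈ setStab X ↔ ∀ x, x ∈ X ↔ g⁻¹ * x * g ∈ X := Iff.rfl

lemma conjR_mem {X : Set (Equiv.Perm ℕ)} {g : Equiv.Perm ℕ} (hg : g ∈ setStab X)
    {x : Equiv.Perm ℕ} (hx : x ∈ X) : g⁻¹ * x * g ∈ X :=
  (mem_setStab.mp hg x).mp hx

lemma conjL_mem {X : Set (Equiv.Perm ℕ)} {g : Equiv.Perm ℕ} (hg : g ∈ setStab X)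
    {x : Equiv.Perm ℕ} (hx : x ∈ X) : g * x * g⁻¹ ∈ X := by
  have h := mem_setStab.mp ((setStab X).inv_mem hg) x
  rw [inv_inv] at h
  exact h.mp hx

/-- The permutation of `X` induced by conjugation by an element of `N_X`. -/
def conjPerm (X : Set (Equiv.Perm ℕ)) (g : NX X) : Equiv.Perm X where
  toFun x := ⟨(g : Equiv.Perm ℕ) * x * (g : Equiv.Perm ℕ)⁻¹,
    conjL_mem (Subgroup.mem_inf.mp g.2).2 x.2⟩
  invFun x := ⟨(g : Equiv.Perm ℕ)⁻¹ * x * (g : Equiv.Perm ℕ),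
    conjR_mem (Subgroup.mem_inf.mp g.2).2 x.2⟩
  left_inv x := by
    apply Subtype.ext
    show (g : Equiv.Perm ℕ)⁻¹ * ((g : Equiv.Perm ℕ) * x * (g : Equiv.Perm ℕ)⁻¹) *
      (g : Equiv.Perm ℕ) = x
    group
  right_inv x := by
    apply Subtype.ext
    show (g : Equiv.Perm ℕ) * ((g : Equiv.Perm ℕ)⁻¹ * x * (g : Equiv.Perm ℕ)) *
      (g : Equiv.Perm ℕ)⁻¹ = x
    group

/-- The action of `N_X` on `X` by conjugation, as a homomorphism `N_X →* Sym(X)`. -/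
def MXhom (X : Set (Equiv.Perm ℕ)) : NX X →* Equiv.Perm X where
  toFun := conjPerm X
  map_one' := by
    apply Equiv.ext
    intro x
    apply Subtype.ext
    show ((1 : NX X) : Equiv.Perm ℕ) * x * ((1 : NX X) : Equiv.Perm ℕ)⁻¹ = x
    simp
  map_mul' a b := by
    apply Equiv.ext
    intro x
    apply Subtype.ext
    show ((a * b : NX X) : Equiv.Perm ℕ) * x * ((a * b : NX X) : Equiv.Perm ℕ)⁻¹
      = (a : Equiv.Perm ℕ) * ((b : Equiv.Perm ℕ) * x * (b : Equiv.Perm ℕ)⁻¹) *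
        (a : Equiv.Perm ℕ)⁻¹
    push_cast
    group

/-- `M_X = N_X/S_X`, realized as the image of `N_X` in `Sym(X)` (the action of `N_X`
on `X` is by conjugation, with kernel `S_X`). -/
def MX (X : Set (Equiv.Perm ℕ)) : Subgroup (Equiv.Perm X) := (MXhom X).range

/-- The permutation module `k[Ω]` of the `G`-set `Ω` has a nonzero projective direct summand. -/
def HasProjSummand (k : Type) [Field k] (G : Type*) [Group G] (Ω : Type*) [MulAction G Ω] :
    Prop :=
  ∃ P W : Submodule (MonoidAlgebra k G) (Representation.ofMulAction k G Ω).asModule,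
    IsCompl P W ∧ P ≠ ⊥ ∧ Module.Projective (MonoidAlgebra k G) P

/-- `X` is a fixed point set: `X ∈ 𝓢^q`, `X` is closed, and the permutation
`k M_X`-module `k[X]` has a nonzero projective direct summand. -/
def IsFPS (p q : ℕ) (k : Type) [Field k] (X : Set (Equiv.Perm ℕ)) : Prop :=
  memS q X ∧ IsClosedSet p X ∧ HasProjSummand k (MX X) X

/-- `X` and `Y` (with disjoint supports) are coprime: `N_{X*Y} = N_X × N_Y`. -/
def CoprimeSets (X Y : Set (Equiv.Perm ℕ)) : Prop := NX (X * Y) = NX X ⊔ NX Y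

/-- `X` is projective-free: no factor in a decomposition of `X` into irreducibles
is projective. -/
def ProjFree (p : ℕ) (X : Set (Equiv.Perm ℕ)) : Prop :=
  ∀ L : List (Set (Equiv.Perm ℕ)), (∀ Y ∈ L, IsIrred Y) →
    L.Pairwise (fun A B => Disjoint (ssupp A) (ssupp B)) →
    X = L.prod → ∀ Y ∈ L, ¬ IsProjectiveSet p Y


section Aux

lemma mem_psupp' {ρ : Equiv.Perm ℕ} {ω : ℕ} : ω ∈ psupp ρ ↔ ρ ω ≠ ω := Iff.rfl

lemma apply_mem_psupp {ρ : Equiv.Perm ℕ} {ω : ℕ} (h : ω ∈ psupp ρ) : ρ ω ∈ psupp ρ :=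
  fun hc => h (ρ.injective hc)

lemma psupp_subset_ssupp {X : Set (Equiv.Perm ℕ)} {ρ : Equiv.Perm ℕ} (h : ρ ∈ X) :
    psupp ρ ⊆ ssupp X := Set.subset_biUnion_of_mem h

lemma psupp_conjR (g x : Equiv.Perm ℕ) : psupp (conjR g x) = ⇑g ⁻¹' psupp x := by
  ext ω
  simp only [psupp, conjR, Set.mem_preimage, Set.mem_setOf_eq, Equiv.Perm.mul_apply, ne_eq]
  constructor
  · intro h hc
    exact h (by rw [hc]; exact g.symm_apply_apply ω)
  · intro h hc
    apply h
    have := congrArg g hc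
    rwa [Equiv.Perm.coe_inv, g.apply_symm_apply] at this

lemma exists_ne_one {X : Set (Equiv.Perm ℕ)} (hne : X.Nonempty) (h1 : X ≠ {1}) :
    ∃ x ∈ X, x ≠ 1 := by
  by_contra h
  push_neg at h
  apply h1
  ext x
  simp only [Set.mem_singleton_iff]
  refine ⟨fun hx => h x hx, fun hx => ?_⟩
  obtain ⟨a, ha⟩ := hne
  have := h a ha
  rwa [hx, ← this]

lemma psupp_ne_one {x : Equiv.Perm ℕ} (h : x ≠ 1) : (psupp x).Nonempty := by
  by_contra hc
  rw [Set.not_nonempty_iff_eq_empty] at hc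
  apply h
  ext n
  simp only [Equiv.Perm.one_apply]
  by_contra hn
  exact Set.eq_empty_iff_forall_notMem.mp hc n hn

lemma prod_apply_of_fixed (l : List (Equiv.Perm ℕ)) (ω : ℕ) (h : ∀ a ∈ l, a ω = ω) :
    l.prod ω = ω := by
  induction l with
  | nil => rfl
  | cons b t ih =>
    rw [List.prod_cons, Equiv.Perm.mul_apply, ih fun a ha => h a (List.mem_cons_of_mem b ha)]
    exact h b List.mem_cons_self

lemma prod_apply_of_disjoint (l : List (Equiv.Perm ℕ)) (hl : l.Pairwise Equiv.Perm.Disjoint)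
    {a : Equiv.Perm ℕ} (ha : a ∈ l) {ω : ℕ} (hω : a ω ≠ ω) : l.prod ω = a ω := by
  induction l with
  | nil => cases ha
  | cons b t ih =>
    rw [List.pairwise_cons] at hl
    rw [List.prod_cons, Equiv.Perm.mul_apply]
    rcases List.mem_cons.mp ha with rfl | hat
    · rw [prod_apply_of_fixed t ω fun c hc => (hl.1 c hc ω).resolve_left hω]
    · rw [ih hl.2 hat]
      rcases hl.1 a hat (a ω) with h | h
      · exact h
      · exact absurd (a.injective h) hω

open scoped Classical in
/-- Restriction of a permutation to a (both-ways) invariant set, extended by the identity. -/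
noncomputable def restrict (A : Set ℕ) (x : Equiv.Perm ℕ) : Equiv.Perm ℕ :=
  if h : ∀ ω, ω ∈ A ↔ x ω ∈ A then Equiv.Perm.ofSubtype (x.subtypePerm (fun ω => (h ω).symm)) else 1

lemma restrict_apply_of_mem {A : Set ℕ} {x : Equiv.Perm ℕ} (h : ∀ ω, ω ∈ A ↔ x ω ∈ A)
    {ω : ℕ} (hω : ω ∈ A) : restrict A x ω = x ω := by
  classical
  simp only [restrict, dif_pos h]
  rw [Equiv.Perm.ofSubtype_apply_of_mem _ hω]
  rfl

lemma restrict_apply_of_not_mem {A : Set ℕ} {x : Equiv.Perm ℕ} {ω : ℕ} (hω : ω ∉ A) :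
    restrict A x ω = ω := by
  classical
  simp only [restrict]
  split_ifs with h
  · exact Equiv.Perm.ofSubtype_apply_of_not_mem _ hω
  · rfl

lemma psupp_restrict_subset (A : Set ℕ) (x : Equiv.Perm ℕ) : psupp (restrict A x) ⊆ A :=
  fun _ hω => by_contra fun hc => hω (restrict_apply_of_not_mem hc)

end Aux

/-- If `X ∈ 𝓢^q` is irreducible with `|X| > 1`, then `Δ^i X` is irreducible
for every `i ≥ 1`. -/
theorem stmt_3 (q : ℕ) (hq : 2 ≤ q) (X : Set (Equiv.Perm ℕ)) (hX : memS q X)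
    (hirr : IsIrred X) (hcard : 1 < X.ncard) (i : ℕ) (hi : 1 ≤ i)
    (D : Set (Equiv.Perm ℕ)) (hD : IsDelta i X D) :
    IsIrred D := by
  clear hq
  obtain ⟨g, hdisj, hDdef⟩ := hD
  obtain ⟨⟨hXfin, hXne, hXne1, hXps⟩, hfull, -⟩ := hX
  obtain ⟨x0, hx0⟩ := hXne
  set Φ : Equiv.Perm ℕ → Equiv.Perm ℕ :=
    fun x => (List.ofFn fun j => conjR (g j) x).prod with hΦ
  -- support of X is nonempty and finite
  have hssne : (ssupp X).Nonempty := by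
    obtain ⟨x, hx, hx1⟩ := exists_ne_one ⟨x0, hx0⟩ hXne1
    exact (psupp_ne_one hx1).mono (psupp_subset_ssupp hx)
  have hssfin : (ssupp X).Finite := hfull x0 hx0 ▸ hXps x0 hx0
  -- the blocks S j
  set S : Fin i → Set ℕ := fun j => ⇑(g j) ⁻¹' ssupp X with hSS
  have hSpsupp : ∀ (j : Fin i), ∀ x ∈ X, psupp (conjR (g j) x) = S j := by
    intro j x hx
    rw [psupp_conjR, hfull x hx]
  have hSdisj : ∀ j k : Fin i, j ≠ k → Disjoint (S j) (S k) := by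
    intro j k hjk
    refine Set.disjoint_of_subset ?_ ?_ (hdisj j k hjk)
    · rw [← hSpsupp j x0 hx0]
      exact psupp_subset_ssupp (Set.mem_image_of_mem _ hx0)
    · rw [← hSpsupp k x0 hx0]
      exact psupp_subset_ssupp (Set.mem_image_of_mem _ hx0)
  have hSne : ∀ j : Fin i, (S j).Nonempty := by
    intro j
    obtain ⟨n, hn⟩ := hssne
    exact ⟨(g j)⁻¹ n, by simp only [hSS, Set.mem_preimage, Equiv.Perm.coe_inv, Equiv.apply_symm_apply]; exact hn⟩
  have hSfin : ∀ j : Fin i, (S j).Finite := fun j =>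
    Set.Finite.preimage (Equiv.injective _).injOn hssfin
  -- evaluation of Φ
  have hpair : ∀ x ∈ X, (List.ofFn fun j => conjR (g j) x).Pairwise Equiv.Perm.Disjoint := by
    intro x hx
    rw [List.pairwise_ofFn]
    intro j k hjk ω
    by_cases h : conjR (g j) x ω = ω
    · exact Or.inl h
    · right
      have hωj : ω ∈ S j := hSpsupp j x hx ▸ (h : ω ∈ psupp (conjR (g j) x))
      have hωk : ω ∉ S k := Set.disjoint_left.mp (hSdisj j k (ne_of_lt hjk)) hωj
      by_contra h2
      exact hωk (hSpsupp k x hx ▸ (h2 : ω ∈ psupp (conjR (g k) x)))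
  have heval : ∀ x ∈ X, ∀ (j : Fin i), ∀ ω ∈ S j, Φ x ω = conjR (g j) x ω := by
    intro x hx j ω hω
    have hne : conjR (g j) x ω ≠ ω := by
      rw [← hSpsupp j x hx] at hω
      exact hω
    exact prod_apply_of_disjoint _ (hpair x hx) (List.mem_ofFn.mpr ⟨j, rfl⟩) hne
  have hevalout : ∀ x ∈ X, ∀ ω, (∀ j : Fin i, ω ∉ S j) → Φ x ω = ω := by
    intro x hx ω hω
    apply prod_apply_of_fixed
    intro a ha
    obtain ⟨j, rfl⟩ := List.mem_ofFn.mp ha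
    by_contra h
    exact hω j (hSpsupp j x hx ▸ (h : _ ∈ psupp _))
  have hpsuppΦ : ∀ x ∈ X, psupp (Φ x) = ⋃ j, S j := by
    intro x hx
    ext ω
    constructor
    · intro h
      by_contra hc
      simp only [Set.mem_iUnion, not_exists] at hc
      exact h (hevalout x hx ω hc)
    · intro h
      obtain ⟨j, hj⟩ := Set.mem_iUnion.mp h
      show Φ x ω ≠ ω
      rw [heval x hx j ω hj]
      rw [← hSpsupp j x hx] at hj
      exact hj
  have hconjval : ∀ (x : Equiv.Perm ℕ) (j : Fin i) (ω : ℕ),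
      conjR (g j) x ω = (g j)⁻¹ (x (g j ω)) := by
    intro x j ω
    simp [conjR, Equiv.Perm.mul_apply]
  -- agreement on one block forces equality
  have hagree : ∀ x ∈ X, ∀ x' ∈ X, ∀ j : Fin i,
      (∀ ω ∈ S j, Φ x ω = Φ x' ω) → x = x' := by
    intro x hx x' hx' j h
    ext n
    by_cases hn : n ∈ ssupp X
    · have hω : (g j)⁻¹ n ∈ S j := by
        simp only [hSS, Set.mem_preimage, Equiv.Perm.coe_inv, Equiv.apply_symm_apply]
        exact hn
      have := h _ hω
      rw [heval x hx j _ hω, heval x' hx' j _ hω, hconjval, hconjval,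
        Equiv.Perm.coe_inv, Equiv.apply_symm_apply] at this
      exact ((g j)⁻¹).injective this
    · have h1 : x n = n := not_not.mp fun hc => hn (hfull x hx ▸ (hc : n ∈ psupp x))
      have h2 : x' n = n := not_not.mp fun hc => hn (hfull x' hx' ▸ (hc : n ∈ psupp x'))
      rw [h1, h2]
  have j0 : Fin i := ⟨0, hi⟩
  constructor
  · -- memF D
    refine ⟨hDdef ▸ hXfin.image Φ, hDdef ▸ ⟨Φ x0, Set.mem_image_of_mem Φ hx0⟩, ?_, ?_⟩
    · intro hD1
      have hmem : Φ x0 ∈ D := hDdef ▸ Set.mem_image_of_mem Φ hx0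
      rw [hD1, Set.mem_singleton_iff] at hmem
      obtain ⟨ω, hω⟩ := hSne j0
      have : Φ x0 ω ≠ ω := by
        rw [heval x0 hx0 j0 ω hω]
        rw [← hSpsupp j0 x0 hx0] at hω
        exact hω
      rw [hmem] at this
      exact this rfl
    · intro ρ hρ
      rw [hDdef] at hρ
      obtain ⟨x, hx, rfl⟩ := hρ
      rw [hpsuppΦ x hx]
      exact Set.finite_iUnion hSfin
  -- irreducibility
  intro Y Z hY hZ hYZdisj heq
  obtain ⟨hYfin, hYne, hYne1, hYps⟩ := hY
  obtain ⟨hZfin, hZne, hZne1, hZps⟩ := hZ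
  have hypsupp : ∀ y ∈ Y, psupp y ⊆ ssupp Y := fun y hy => psupp_subset_ssupp hy
  have hzpsupp : ∀ z ∈ Z, psupp z ⊆ ssupp Z := fun z hz => psupp_subset_ssupp hz
  have hfactor : ∀ x ∈ X, ∃ y ∈ Y, ∃ z ∈ Z, y * z = Φ x := by
    intro x hx
    have : Φ x ∈ Y * Z := by
      rw [← heq, hDdef]
      exact Set.mem_image_of_mem Φ hx
    exact Set.mem_mul.mp this
  -- products evaluated on each side
  have hmulβ : ∀ (y : Equiv.Perm ℕ), ∀ z ∈ Z, ∀ ω, ω ∉ ssupp Z → (y * z) ω = y ω := by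
    intro y z hz ω hω
    show y (z ω) = y ω
    congr 1
    exact not_not.mp fun hc => hω (hzpsupp z hz hc)
  have hmulγ : ∀ y ∈ Y, ∀ z ∈ Z, ∀ ω, ω ∉ ssupp Y → (y * z) ω = z ω := by
    intro y hy z hz ω hω
    show y (z ω) = z ω
    have hzω : z ω ∉ ssupp Y := by
      by_cases h : z ω = ω
      · rw [h]; exact hω
      · intro hc
        exact Set.disjoint_left.mp hYZdisj hc (hzpsupp z hz (apply_mem_psupp (h : ω ∈ psupp z)))
    exact not_not.mp fun hc => hzω (hypsupp y hy hc)
  -- the blocks are covered by the two supports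
  have hcover : ∀ j : Fin i, S j ⊆ ssupp Y ∪ ssupp Z := by
    intro j ω hω
    obtain ⟨y0, hy0, z0, hz0, hyz0⟩ := hfactor x0 hx0
    have hω' : ω ∈ psupp (y0 * z0) := by
      rw [hyz0, hpsuppΦ x0 hx0]
      exact Set.mem_iUnion.mpr ⟨j, hω⟩
    by_contra hc
    rw [Set.mem_union] at hc
    push_neg at hc
    exact hω' (by
      rw [hmulβ y0 z0 hz0 ω hc.2]
      exact not_not.mp fun h => hc.1 (hypsupp y0 hy0 h))
  -- each block lies entirely in one of the two supports
  have hdichot : ∀ j : Fin i, S j ⊆ ssupp Y ∨ S j ⊆ ssupp Z := by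
    intro j
    by_contra hc
    push_neg at hc
    obtain ⟨ω1, hω1S, hω1β⟩ := Set.not_subset.mp hc.1
    obtain ⟨ω2, hω2S, hω2γ⟩ := Set.not_subset.mp hc.2
    have hω1γ : ω1 ∈ ssupp Z := (hcover j hω1S).resolve_left hω1β
    have hω2β : ω2 ∈ ssupp Y := (hcover j hω2S).resolve_right hω2γ
    -- invariance of the half blocks under the conjugates
    have hconjinvβ : ∀ x ∈ X, ∀ ω, ω ∈ S j ∩ ssupp Y → conjR (g j) x ω ∈ S j ∩ ssupp Y := by
      intro x hx ω hω
      obtain ⟨y, hy, z, hz, hyz⟩ := hfactor x hx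
      refine ⟨?_, ?_⟩
      · have h1 : ω ∈ psupp (conjR (g j) x) := (hSpsupp j x hx).symm ▸ hω.1
        exact hSpsupp j x hx ▸ apply_mem_psupp h1
      · have hωγ : ω ∉ ssupp Z := fun hcc => Set.disjoint_left.mp hYZdisj hω.2 hcc
        have h2 : conjR (g j) x ω = y ω := by
          rw [← heval x hx j ω hω.1, ← hyz]
          exact hmulβ y z hz ω hωγ
        rw [h2]
        by_cases hyω : y ω = ω
        · rw [hyω]; exact hω.2
        · exact hypsupp y hy (apply_mem_psupp hyω)
    have hconjinvγ : ∀ x ∈ X, ∀ ω, ω ∈ S j ∩ ssupp Z → conjR (g j) x ω ∈ S j ∩ ssupp Z := by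
      intro x hx ω hω
      obtain ⟨y, hy, z, hz, hyz⟩ := hfactor x hx
      refine ⟨?_, ?_⟩
      · have h1 : ω ∈ psupp (conjR (g j) x) := (hSpsupp j x hx).symm ▸ hω.1
        exact hSpsupp j x hx ▸ apply_mem_psupp h1
      · have hωβ : ω ∉ ssupp Y := fun hcc => Set.disjoint_right.mp hYZdisj hω.2 hcc
        have h2 : conjR (g j) x ω = z ω := by
          rw [← heval x hx j ω hω.1, ← hyz]
          exact hmulγ y hy z hz ω hωβ
        rw [h2]
        by_cases hzω : z ω = ω
        · rw [hzω]; exact hω.2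
        · exact hzpsupp z hz (apply_mem_psupp hzω)
    set A' : Set ℕ := ⇑(g j) '' (S j ∩ ssupp Y) with hA'
    set B' : Set ℕ := ⇑(g j) '' (S j ∩ ssupp Z) with hB'
    have hunion : A' ∪ B' = ssupp X := by
      rw [hA', hB', ← Set.image_union, ← Set.inter_union_distrib_left,
        Set.inter_eq_self_of_subset_left (hcover j)]
      simp only [hSS]
      exact Set.image_preimage_eq _ (g j).surjective
    have hAB : Disjoint A' B' :=
      Set.disjoint_image_of_injective (g j).injective
        (hYZdisj.mono Set.inter_subset_right Set.inter_subset_right)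
    have hA'ss : A' ⊆ ssupp X := hunion ▸ Set.subset_union_left
    have hB'ss : B' ⊆ ssupp X := hunion ▸ Set.subset_union_right
    have hA'ne : A'.Nonempty := ⟨g j ω2, ⟨ω2, ⟨hω2S, hω2β⟩, rfl⟩⟩
    have hB'ne : B'.Nonempty := ⟨g j ω1, ⟨ω1, ⟨hω1S, hω1γ⟩, rfl⟩⟩
    have hgconj : ∀ (x : Equiv.Perm ℕ) (ω : ℕ), g j (conjR (g j) x ω) = x (g j ω) := by
      intro x ω
      rw [hconjval]
      exact (g j).apply_symm_apply _
    have hinvA : ∀ x ∈ X, ∀ n, n ∈ A' ↔ x n ∈ A' := by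
      intro x hx n
      constructor
      · rintro ⟨ω, hω, rfl⟩
        exact ⟨conjR (g j) x ω, hconjinvβ x hx ω hω, hgconj x ω⟩
      · intro hxn
        by_contra hn
        by_cases hns : n ∈ ssupp X
        · have hnB : n ∈ B' := by
            have : n ∈ A' ∪ B' := by rw [hunion]; exact hns
            exact this.resolve_left hn
          obtain ⟨ω, hω, rfl⟩ := hnB
          have : x (g j ω) ∈ B' := ⟨conjR (g j) x ω, hconjinvγ x hx ω hω, hgconj x ω⟩
          exact Set.disjoint_left.mp hAB hxn this
        · have hxnn : x n = n := not_not.mp fun hcc => hns (hfull x hx ▸ (hcc : n ∈ psupp x))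
          rw [hxnn] at hxn
          exact hn hxn
    have hinvB : ∀ x ∈ X, ∀ n, n ∈ B' ↔ x n ∈ B' := by
      intro x hx n
      constructor
      · rintro ⟨ω, hω, rfl⟩
        exact ⟨conjR (g j) x ω, hconjinvγ x hx ω hω, hgconj x ω⟩
      · intro hxn
        by_contra hn
        by_cases hns : n ∈ ssupp X
        · have hnA : n ∈ A' := by
            have : n ∈ A' ∪ B' := by rw [hunion]; exact hns
            exact this.resolve_right hn
          obtain ⟨ω, hω, rfl⟩ := hnA
          have : x (g j ω) ∈ A' := ⟨conjR (g j) x ω, hconjinvβ x hx ω hω, hgconj x ω⟩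
          exact Set.disjoint_right.mp hAB hxn this
        · have hxnn : x n = n := not_not.mp fun hcc => hns (hfull x hx ▸ (hcc : n ∈ psupp x))
          rw [hxnn] at hxn
          exact hn hxn
    -- the two restricted factor sets
    have hY₁ : memF ((fun x => restrict A' x) '' X) := by
      refine ⟨hXfin.image _, ⟨restrict A' x0, Set.mem_image_of_mem _ hx0⟩, ?_, ?_⟩
      · intro h1
        have hmem : restrict A' x0 ∈ (fun x => restrict A' x) '' X :=
          Set.mem_image_of_mem _ hx0
        rw [h1, Set.mem_singleton_iff] at hmem
        obtain ⟨n, hn⟩ := hA'ne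
        have hx0n : x0 n ≠ n := by
          have : n ∈ psupp x0 := by rw [hfull x0 hx0]; exact hA'ss hn
          exact this
        apply hx0n
        rw [← restrict_apply_of_mem (hinvA x0 hx0) hn, hmem]
        rfl
      · intro ρ hρ
        obtain ⟨x, hx, rfl⟩ := hρ
        exact hssfin.subset ((psupp_restrict_subset A' x).trans hA'ss)
    have hZ₁ : memF ((fun x => restrict B' x) '' X) := by
      refine ⟨hXfin.image _, ⟨restrict B' x0, Set.mem_image_of_mem _ hx0⟩, ?_, ?_⟩
      · intro h1
        have hmem : restrict B' x0 ∈ (fun x => restrict B' x) '' X :=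
          Set.mem_image_of_mem _ hx0
        rw [h1, Set.mem_singleton_iff] at hmem
        obtain ⟨n, hn⟩ := hB'ne
        have hx0n : x0 n ≠ n := by
          have : n ∈ psupp x0 := by rw [hfull x0 hx0]; exact hB'ss hn
          exact this
        apply hx0n
        rw [← restrict_apply_of_mem (hinvB x0 hx0) hn, hmem]
        rfl
      · intro ρ hρ
        obtain ⟨x, hx, rfl⟩ := hρ
        exact hssfin.subset ((psupp_restrict_subset B' x).trans hB'ss)
    have hssY₁ : ssupp ((fun x => restrict A' x) '' X) ⊆ A' := by
      refine Set.iUnion₂_subset fun ρ hρ => ?_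
      obtain ⟨x, hx, rfl⟩ := hρ
      exact psupp_restrict_subset A' x
    have hssZ₁ : ssupp ((fun x => restrict B' x) '' X) ⊆ B' := by
      refine Set.iUnion₂_subset fun ρ hρ => ?_
      obtain ⟨x, hx, rfl⟩ := hρ
      exact psupp_restrict_subset B' x
    -- the factorization of X itself
    have hXeq : X = (fun x => restrict A' x) '' X * (fun x => restrict B' x) '' X := by
      ext w
      constructor
      · intro hw
        refine Set.mem_mul.mpr ⟨restrict A' w, Set.mem_image_of_mem _ hw,
          restrict B' w, Set.mem_image_of_mem _ hw, ?_⟩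
        ext n
        show restrict A' w (restrict B' w n) = w n
        by_cases hnA : n ∈ A'
        · rw [restrict_apply_of_not_mem (Set.disjoint_left.mp hAB hnA),
            restrict_apply_of_mem (hinvA w hw) hnA]
        · by_cases hnB : n ∈ B'
          · rw [restrict_apply_of_mem (hinvB w hw) hnB,
              restrict_apply_of_not_mem (Set.disjoint_right.mp hAB ((hinvB w hw n).mp hnB))]
          · have hns : n ∉ ssupp X := fun hcc => by
              have : n ∈ A' ∪ B' := by rw [hunion]; exact hcc
              rcases this with h | h
              · exact hnA h
              · exact hnB h
            rw [restrict_apply_of_not_mem hnB, restrict_apply_of_not_mem hnA]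
            exact (not_not.mp fun hcc => hns (hfull w hw ▸ (hcc : n ∈ psupp w))).symm
      · intro hw
        obtain ⟨y1, ⟨x, hx, rfl⟩, z1, ⟨x', hx', rfl⟩, rfl⟩ := Set.mem_mul.mp hw
        obtain ⟨u, hu, v, hv, huv⟩ := hfactor x hx
        obtain ⟨u', hu', v', hv', hu'v'⟩ := hfactor x' hx'
        have huv' : u * v' ∈ D := by rw [heq]; exact Set.mul_mem_mul hu hv'
        rw [hDdef] at huv'
        obtain ⟨x'', hx'', hx''eq⟩ := huv'
        have hsuff : restrict A' x * restrict B' x' = x'' := by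
          ext n
          show restrict A' x (restrict B' x' n) = x'' n
          by_cases hnA : n ∈ A'
          · obtain ⟨ω, hω, rfl⟩ := hnA
            have hnA' : g j ω ∈ A' := ⟨ω, hω, rfl⟩
            rw [restrict_apply_of_not_mem (Set.disjoint_left.mp hAB hnA'),
              restrict_apply_of_mem (hinvA x hx) hnA']
            have hωγ : ω ∉ ssupp Z := fun hcc => Set.disjoint_left.mp hYZdisj hω.2 hcc
            have e1 : Φ x ω = Φ x'' ω := by
              rw [hx''eq, ← huv, hmulβ u v hv ω hωγ, hmulβ u v' hv' ω hωγ]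
            rw [heval x hx j ω hω.1, heval x'' hx'' j ω hω.1, hconjval, hconjval] at e1
            exact ((g j)⁻¹).injective e1
          · by_cases hnB : n ∈ B'
            · obtain ⟨ω, hω, rfl⟩ := hnB
              have hnB' : g j ω ∈ B' := ⟨ω, hω, rfl⟩
              rw [restrict_apply_of_mem (hinvB x' hx') hnB',
                restrict_apply_of_not_mem
                  (Set.disjoint_right.mp hAB ((hinvB x' hx' _).mp hnB'))]
              have hωβ : ω ∉ ssupp Y := fun hcc => Set.disjoint_right.mp hYZdisj hω.2 hcc
              have e1 : Φ x' ω = Φ x'' ω := by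
                rw [hx''eq, ← hu'v', hmulγ u' hu' v' hv' ω hωβ, hmulγ u hu v' hv' ω hωβ]
              rw [heval x' hx' j ω hω.1, heval x'' hx'' j ω hω.1, hconjval, hconjval] at e1
              exact ((g j)⁻¹).injective e1
            · have hns : n ∉ ssupp X := fun hcc => by
                have : n ∈ A' ∪ B' := by rw [hunion]; exact hcc
                rcases this with h | h
                · exact hnA h
                · exact hnB h
              rw [restrict_apply_of_not_mem hnB, restrict_apply_of_not_mem hnA]
              exact (not_not.mp fun hcc => hns (hfull x'' hx'' ▸ (hcc : n ∈ psupp x''))).symm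
        rw [hsuff]
        exact hx''
    exact hirr.2 _ _ hY₁ hZ₁ (hAB.mono hssY₁ hssZ₁) hXeq
  -- some block inside each support
  have hjβ : ∃ j : Fin i, S j ⊆ ssupp Y := by
    obtain ⟨y1, hy1, hy1ne⟩ := exists_ne_one hYne hYne1
    obtain ⟨z0, hz0⟩ := hZne
    obtain ⟨ω, hω⟩ := psupp_ne_one hy1ne
    have h1 : y1 * z0 ∈ D := by rw [heq]; exact Set.mul_mem_mul hy1 hz0
    rw [hDdef] at h1
    obtain ⟨x1, hx1, hx1eq⟩ := h1
    have hωβ : ω ∈ ssupp Y := hypsupp y1 hy1 hω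
    have hωU : ω ∈ ⋃ j, S j := by
      rw [← hpsuppΦ x1 hx1, hx1eq]
      show (y1 * z0) ω ≠ ω
      rw [hmulβ y1 z0 hz0 ω fun hcc => Set.disjoint_left.mp hYZdisj hωβ hcc]
      exact hω
    obtain ⟨jβ, hjS⟩ := Set.mem_iUnion.mp hωU
    refine ⟨jβ, (hdichot jβ).resolve_right fun h => ?_⟩
    exact Set.disjoint_left.mp hYZdisj hωβ (h hjS)
  have hjγ : ∃ j : Fin i, S j ⊆ ssupp Z := by
    obtain ⟨z1, hz1, hz1ne⟩ := exists_ne_one hZne hZne1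
    obtain ⟨y0, hy0⟩ := hYne
    obtain ⟨ω, hω⟩ := psupp_ne_one hz1ne
    have h1 : y0 * z1 ∈ D := by rw [heq]; exact Set.mul_mem_mul hy0 hz1
    rw [hDdef] at h1
    obtain ⟨x1, hx1, hx1eq⟩ := h1
    have hωγ : ω ∈ ssupp Z := hzpsupp z1 hz1 hω
    have hωU : ω ∈ ⋃ j, S j := by
      rw [← hpsuppΦ x1 hx1, hx1eq]
      show (y0 * z1) ω ≠ ω
      rw [hmulγ y0 hy0 z1 hz1 ω fun hcc => Set.disjoint_left.mp hYZdisj hcc hωγ]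
      exact hω
    obtain ⟨jγ, hjS⟩ := Set.mem_iUnion.mp hωU
    refine ⟨jγ, (hdichot jγ).resolve_left fun h => ?_⟩
    exact Set.disjoint_left.mp hYZdisj (h hjS) hωγ
  obtain ⟨jβ, hjβ'⟩ := hjβ
  obtain ⟨jγ, hjγ'⟩ := hjγ
  -- two distinct elements of X give a contradiction
  obtain ⟨x, hx, x', hx', hxx'⟩ := (Set.one_lt_ncard hXfin).mp hcard
  obtain ⟨u, hu, v, hv, huv⟩ := hfactor x hx
  obtain ⟨u', hu', v', hv', hu'v'⟩ := hfactor x' hx'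
  have h1 : u * v' ∈ D := by rw [heq]; exact Set.mul_mem_mul hu hv'
  rw [hDdef] at h1
  obtain ⟨x'', hx'', hx''eq⟩ := h1
  have e1 : x'' = x := by
    refine hagree x'' hx'' x hx jβ fun ω hω => ?_
    have hωβ : ω ∈ ssupp Y := hjβ' hω
    have hωγ : ω ∉ ssupp Z := fun hcc => Set.disjoint_left.mp hYZdisj hωβ hcc
    rw [hx''eq, ← huv, hmulβ u v' hv' ω hωγ, hmulβ u v hv ω hωγ]
  have e2 : x'' = x' := by
    refine hagree x'' hx'' x' hx' jγ fun ω hω => ?_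
    have hωγ : ω ∈ ssupp Z := hjγ' hω
    have hωβ : ω ∉ ssupp Y := fun hcc => Set.disjoint_left.mp hYZdisj hcc hωγ
    rw [hx''eq, ← hu'v', hmulγ u hu v' hv' ω hωβ, hmulγ u' hu' v' hv' ω hωβ]
  exact hxx' (e1.symm.trans e2)

end FPS
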